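/- arXiv:1507.05744 — 6 statements merged into one kernel-verified Lean document; each statement's English description precedes it below -/
import Mathlib

section
/- Let G be a group and let L be a finitely generated subgroup of G such that every element of L has finite conjugacy class in G. Then L is virtually abelian: L contains an abelian subgroup of finite index in L. -/
/-!
For `g ∈ L`, the index of the centralizer of `g` in `L` is the size of the conjugacy class of `g`
in `L`, which embeds in its finite conjugacy class in `G`. If `L` is generated by finitely many
elements, its center is the intersection of their centralizers, hence an abelian subgroup of finite
index.
-/

open Subgroup

theorem Subgroup.finiteIndex_centralizer_of_finite_conjugatesOf {G : Type*} [Group G] {g : G}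
    (hg : (conjugatesOf g).Finite) : (centralizer {g}).FiniteIndex := by
  have horbit : MulAction.orbit (ConjAct G) g = conjugatesOf g := by
    ext h
    rw [ConjAct.mem_orbit_conjAct, isConj_comm]
    rfl
  have hindex : (centralizer {g}).index = (conjugatesOf g).ncard := by
    rw [centralizer_eq_comap_stabilizer, ← horbit, ← MulAction.index_stabilizer]
    exact index_comap_of_surjective _ ConjAct.toConjAct.surjective
  rw [finiteIndex_iff, hindex]
  exact ((Set.ncard_pos hg).mpr ⟨g, mem_conjugatesOf_self⟩).ne'

theorem finite_conjugatesOf_of_injective {H G : Type*} [Group H] [Group G] {f : H →* G}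
    (hf : Function.Injective f) {a : H} (ha : (conjugatesOf (f a)).Finite) :
    (conjugatesOf a).Finite :=
  (ha.preimage hf.injOn).subset fun _ hb => f.map_isConj hb

theorem Subgroup.finiteIndex_center_of_fg {H : Type*} [Group H] [Group.FG H]
    (h : ∀ g : H, (centralizer {g}).FiniteIndex) : (center H).FiniteIndex := by
  obtain ⟨S, hS⟩ := Group.fg_def.mp ‹_›
  rw [center_eq_infi' hS]
  exact finiteIndex_iInf fun g => h g

/-- A finitely generated subgroup `L` of a group `G`, all of whose elements have finite
conjugacy class in `G`, is virtually abelian: it contains an abelian subgroup of finite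
index in `L`. -/
theorem fg_subgroup_of_fc_elements_virtually_abelian
    {G : Type*} [Group G] (L : Subgroup G) (hfg : Group.FG L)
    (hfc : ∀ g ∈ L, Set.Finite {h : G | ∃ x : G, x * g * x⁻¹ = h}) :
    ∃ A : Subgroup L, A.FiniteIndex ∧ ∀ a ∈ A, ∀ b ∈ A, a * b = b * a := by
  have hconj (g : L) : (conjugatesOf g).Finite := by
    refine finite_conjugatesOf_of_injective L.subtype_injective ?_
    simpa only [L.coe_subtype, conjugatesOf, isConj_iff] using hfc g g.2
  refine ⟨center L,
    finiteIndex_center_of_fg fun g => finiteIndex_centralizer_of_finite_conjugatesOf (hconj g), ?_⟩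
  intro a ha b _
  exact (mem_center_iff.mp ha b).symm
end

section
/- Let n ≥ 1 and let K be a group containing a subgroup of finite index that is isomorphic to ℤⁿ, the free abelian group of rank n. Then K contains a characteristic subgroup (one mapped onto itself by every automorphism of K) that is isomorphic to ℤⁿ. -/
/-!
The subgroup `C` of `K` generated by all `m`-th powers is characteristic for every `m`. Take
`m` to be the index of the normal core `N` of `H`: then `g ^ m ∈ N ≤ H` for all `g`, so
`C ≤ H`. Inside `H ≅ ℤⁿ` the subgroup `C` contains `mℤⁿ`, hence has finite index in `H`, and a
finite-index subgroup of `ℤⁿ` is again isomorphic to `ℤⁿ`.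
-/

namespace Subgroup

variable {G G' : Type*} [Group G] [Group G']

def powClosure (G : Type*) [Group G] (m : ℕ) : Subgroup G :=
  closure (Set.range fun y : G ↦ y ^ m)

theorem map_powClosure_le (f : G →* G') (m : ℕ) :
    (powClosure G m).map f ≤ powClosure G' m := by
  rw [powClosure, MonoidHom.map_closure]
  apply closure_mono
  rintro _ ⟨_, ⟨y, rfl⟩, rfl⟩
  exact ⟨f y, (map_pow f y m).symm⟩

theorem map_powClosure_equiv (e : G ≃* G') (m : ℕ) :
    (powClosure G m).map (e : G →* G') = powClosure G' m := by
  refine le_antisymm (map_powClosure_le _ m) ((closure_le _).mpr ?_)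
  rintro _ ⟨y, rfl⟩
  exact ⟨e.symm y ^ m, subset_closure ⟨e.symm y, rfl⟩, by simp⟩

instance powClosure_characteristic (m : ℕ) : (powClosure G m).Characteristic :=
  characteristic_iff_map_eq.mpr fun φ ↦ map_powClosure_equiv φ m

theorem powClosure_index_le (N : Subgroup G) [N.Normal] : powClosure G N.index ≤ N :=
  (closure_le N).mpr <| by
    rintro _ ⟨y, rfl⟩
    exact N.pow_index_mem y

theorem powClosure_finiteIndex {G : Type*} [CommGroup G] [Group.FG G] {m : ℕ} (hm : m ≠ 0) :
    (powClosure G m).FiniteIndex := by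
  have hTorsion : IsMulTorsion (G ⧸ powClosure G m) := by
    refine fun q ↦ QuotientGroup.induction_on q fun y ↦ ?_
    refine isOfFinOrder_iff_pow_eq_one.mpr ⟨m, Nat.pos_of_ne_zero hm, ?_⟩
    rw [← QuotientGroup.mk_pow, QuotientGroup.eq_one_iff]
    exact subset_closure ⟨y, rfl⟩
  have := CommGroup.finite_of_fg_isMulTorsion _ hTorsion
  exact finiteIndex_of_finite_quotient

end Subgroup

open Subgroup

theorem nonempty_mulEquiv_of_index_ne_zero {G ι : Type*} [Group G] [Finite ι]
    (e : G ≃* Multiplicative (ι → ℤ)) {S : Subgroup G} (hS : S.index ≠ 0) :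
    Nonempty (S ≃* Multiplicative (ι → ℤ)) := by
  let f := e.trans (MulEquiv.funMultiplicative ι ℤ)
  obtain ⟨g⟩ := Int.subgroup_index_ne_zero_iff.mp <| (S.index_map_equiv f).trans_ne hS
  exact ⟨((f.subgroupMap S).trans g).trans (MulEquiv.funMultiplicative ι ℤ).symm⟩

theorem exists_characteristic_free_abelian_of_finiteIndex_free_abelian_general
    {K : Type*} [Group K] (n : ℕ)
    (H : Subgroup K) (hH : H.FiniteIndex)
    (hiso : Nonempty (H ≃* Multiplicative (Fin n → ℤ))) :
    ∃ C : Subgroup K, C.Characteristic ∧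
      Nonempty (C ≃* Multiplicative (Fin n → ℤ)) := by
  obtain ⟨e⟩ := hiso
  set m := H.normalCore.index
  have hm : m ≠ 0 := H.finiteIndex_normalCore.index_ne_zero
  have hCH : powClosure K m ≤ H := (powClosure_index_le _).trans H.normalCore_le
  have hPowH : (powClosure H m).FiniteIndex := ⟨by
    rw [← index_map_equiv _ e, map_powClosure_equiv]
    exact (powClosure_finiteIndex hm).index_ne_zero⟩
  have hCrel : ((powClosure K m).subgroupOf H).FiniteIndex :=
    finiteIndex_of_le <| map_le_iff_le_comap.mp (map_powClosure_le H.subtype m)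
  obtain ⟨f⟩ := nonempty_mulEquiv_of_index_ne_zero e hCrel.index_ne_zero
  exact ⟨powClosure K m, inferInstance, ⟨(subgroupOfEquivOfLe hCH).symm.trans f⟩⟩

/-- If a group `K` has a finite-index subgroup isomorphic to `ℤⁿ` (with `n ≥ 1`), then
`K` has a characteristic subgroup isomorphic to `ℤⁿ`. -/
theorem exists_characteristic_free_abelian_of_finiteIndex_free_abelian
    {K : Type*} [Group K] (n : ℕ) (hn : 1 ≤ n)
    (H : Subgroup K) (hH : H.FiniteIndex)
    (hiso : Nonempty (H ≃* Multiplicative (Fin n → ℤ))) :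
    ∃ C : Subgroup K, C.Characteristic ∧
      Nonempty (C ≃* Multiplicative (Fin n → ℤ)) :=
  exists_characteristic_free_abelian_of_finiteIndex_free_abelian_general n H hH hiso
end

section
/- Let V be a set and let H be a collection of subsets of V that is closed under complementation. Let (h_i) be a strongly separated descending sequence in H. Then there exists a unique ultrafilter α on H with h_i ∈ α for every i, namely α = {k ∈ H : h_i ⊆ k for some i}. -/
variable {V : Type*}

/-- Two subsets `a`, `b` of `V` cross if the four sets `a ∩ b`, `a \ b`, `b \ a`,
`(a ∪ b)ᶜ` are all nonempty. -/
def Crosses (a b : Set V) : Prop :=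
  (a ∩ b).Nonempty ∧ (a \ b).Nonempty ∧ (b \ a).Nonempty ∧ ((a ∪ b)ᶜ).Nonempty

/-- `h` and `k` are strongly separated (relative to `H`) if no member of `H` crosses
both of them. -/
def StronglySeparated (H : Set (Set V)) (h k : Set V) : Prop :=
  ∀ m ∈ H, ¬(Crosses m h ∧ Crosses m k)

/-- An ultrafilter on the complement-closed collection `H`: a subset `α ⊆ H` containing
exactly one of each complementary pair and closed under passing to larger members of
`H`. -/
def IsUltrafilterOn (H : Set (Set V)) (α : Set (Set V)) : Prop :=
  α ⊆ H ∧ (∀ h ∈ H, Xor' (h ∈ α) (hᶜ ∈ α)) ∧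
    (∀ h ∈ α, ∀ k ∈ H, h ⊆ k → k ∈ α)

/-- A strongly separated descending sequence in `H`: nonempty members of `H`, nested,
with empty intersection, consecutive terms strongly separated. -/
def IsSSDescSeq (H : Set (Set V)) (h : ℕ → Set V) : Prop :=
  (∀ i, h i ∈ H) ∧ (∀ i, (h i).Nonempty) ∧ (∀ i, h (i + 1) ⊆ h i) ∧
    (⋂ i, h i) = ∅ ∧ ∀ i, StronglySeparated H (h i) (h (i + 1))

/-- A strongly separated descending sequence determines a unique ultrafilter containing
all its terms, namely `{k ∈ H | h i ⊆ k for some i}`. -/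
theorem exists_unique_ultrafilter_of_ssDescSeq
    (H : Set (Set V)) (hcompl : ∀ h ∈ H, hᶜ ∈ H)
    (h : ℕ → Set V) (hseq : IsSSDescSeq H h) :
    IsUltrafilterOn H {k | k ∈ H ∧ ∃ i, h i ⊆ k} ∧
      (∀ i, h i ∈ {k | k ∈ H ∧ ∃ i, h i ⊆ k}) ∧
      ∀ β : Set (Set V), IsUltrafilterOn H β → (∀ i, h i ∈ β) →
        β = {k | k ∈ H ∧ ∃ i, h i ⊆ k} := by
  obtain ⟨hmem, hne, hdesc, hint, hss⟩ := hseq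
  have mono : ∀ i j, i ≤ j → h j ⊆ h i := by
    intro i j hij
    induction hij with
    | refl => exact subset_rfl
    | step _ ih => exact (hdesc _).trans ih
  -- not both k and kᶜ can contain some h i
  have notboth : ∀ k : Set V, (∃ i, h i ⊆ k) → (∃ j, h j ⊆ kᶜ) → False := by
    rintro k ⟨i, hi⟩ ⟨j, hj⟩
    obtain ⟨x, hx⟩ := hne (max i j)
    exact hj (mono j (max i j) (le_max_right i j) hx)
      (hi (mono i (max i j) (le_max_left i j) hx))
  -- the key dichotomy
  have key : ∀ k ∈ H, (∃ i, h i ⊆ k) ∨ (∃ i, h i ⊆ kᶜ) := by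
    intro k hk
    by_contra hcon
    push_neg at hcon
    obtain ⟨h1, h2⟩ := hcon
    have hinK : ∀ i, (h i ∩ k).Nonempty := by
      intro i
      obtain ⟨x, hx, hxk⟩ := Set.not_subset.mp (h2 i)
      exact ⟨x, hx, not_not.mp hxk⟩
    have hnotK : ∀ i, (h i \ k).Nonempty := by
      intro i
      obtain ⟨x, hx, hxk⟩ := Set.not_subset.mp (h1 i)
      exact ⟨x, hx, hxk⟩
    obtain ⟨x, hx0, hxk⟩ := hinK 0
    obtain ⟨y, hy0, hyk⟩ := hnotK 0
    have hxj : ∃ j, x ∉ h j := by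
      by_contra hc
      push_neg at hc
      have : x ∈ ⋂ i, h i := Set.mem_iInter.mpr hc
      rw [hint] at this
      exact this
    have hyj : ∃ j, y ∉ h j := by
      by_contra hc
      push_neg at hc
      have : y ∈ ⋂ i, h i := Set.mem_iInter.mpr hc
      rw [hint] at this
      exact this
    obtain ⟨j1, hj1⟩ := hxj
    obtain ⟨j2, hj2⟩ := hyj
    set N := max j1 j2
    have crosses : ∀ i, N ≤ i → Crosses k (h i) := by
      intro i hNi
      refine ⟨⟨(hinK i).choose, (hinK i).choose_spec.2, (hinK i).choose_spec.1⟩,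
        ⟨x, hxk, fun hxi => hj1 (mono j1 i ((le_max_left j1 j2).trans hNi) hxi)⟩,
        ⟨(hnotK i).choose, (hnotK i).choose_spec.1, (hnotK i).choose_spec.2⟩,
        ⟨y, ?_⟩⟩
      simp only [Set.mem_compl_iff, Set.mem_union, not_or]
      exact ⟨hyk, fun hyi => hj2 (mono j2 i ((le_max_right j1 j2).trans hNi) hyi)⟩
    exact hss N k hk ⟨crosses N le_rfl, crosses (N + 1) (Nat.le_succ_of_le le_rfl)⟩
  refine ⟨⟨fun k hk => hk.1, ?_, ?_⟩, ?_, ?_⟩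
  · intro k hk
    rcases key k hk with hl | hr
    · exact Or.inl ⟨⟨hk, hl⟩, fun hc => notboth k hl hc.2⟩
    · exact Or.inr ⟨⟨hcompl k hk, hr⟩, fun hc => notboth k hc.2 hr⟩
  · rintro a ⟨_, i, hi⟩ k hk hak
    exact ⟨hk, i, hi.trans hak⟩
  · exact fun i => ⟨hmem i, i, subset_rfl⟩
  · rintro β ⟨hβH, hβxor, hβup⟩ hβh
    ext k
    constructor
    · intro hkβ
      have hkH := hβH hkβ
      refine ⟨hkH, ?_⟩
      rcases key k hkH with hl | hr
      · exact hl
      · exfalso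
        obtain ⟨i, hi⟩ := hr
        have : kᶜ ∈ β := hβup (h i) (hβh i) kᶜ (hcompl k hkH) hi
        rcases hβxor k hkH with ⟨_, hc⟩ | ⟨_, hc⟩ <;> [exact hc this; exact hc hkβ]
    · rintro ⟨hkH, i, hi⟩
      exact hβup (h i) (hβh i) k hkH hi
end

section
/- Let V be a set and let H be a collection of subsets of V that is closed under complementation. Let (h_i) be a strongly separated descending sequence in H and let β be an ultrafilter on H with h_i ∈ β for every i. Then for every m ∈ β there exists an index i with h_i ⊆ m (and hence h_j ⊆ m for all j ≥ i). -/
variable {V : Type*}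

/-- If an ultrafilter `β` contains every term of a strongly separated descending
sequence, then every member of `β` contains a tail of the sequence. -/
theorem tail_subset_of_mem_ultrafilter
    (H : Set (Set V)) (hcompl : ∀ h ∈ H, hᶜ ∈ H)
    (h : ℕ → Set V) (hseq : IsSSDescSeq H h)
    (β : Set (Set V)) (hβ : IsUltrafilterOn H β) (hall : ∀ i, h i ∈ β) :
    ∀ m ∈ β, ∃ i, h i ⊆ m ∧ ∀ j, i ≤ j → h j ⊆ m := by
  obtain ⟨hmemH, hne, hdesc, hinter, hss⟩ := hseq
  obtain ⟨hsub, hxor, hcons⟩ := hβ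
  have hmono : ∀ i j, i ≤ j → h j ⊆ h i := by
    intro i j hij
    induction j with
    | zero => simp_all
    | succ n ih =>
      rcases Nat.lt_or_ge i (n + 1) with hl | hg
      · exact (hdesc n).trans (ih (Nat.lt_succ_iff.mp hl))
      · have : i = n + 1 := le_antisymm hij hg
        subst this; exact subset_rfl
  intro m hm
  have hmH : m ∈ H := hsub hm
  have hmcβ : mᶜ ∉ β := by
    rcases hxor m hmH with ⟨_, h2⟩ | ⟨_, h2⟩
    · exact h2
    · exact absurd hm h2
  suffices h' : ∃ i, h i ⊆ m by
    obtain ⟨i, hi⟩ := h'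
    exact ⟨i, hi, fun j hj => (hmono i j hj).trans hi⟩
  by_contra hno
  push_neg at hno
  have hdiff : ∀ i, (h i \ m).Nonempty := fun i => Set.not_subset.mp (hno i)
  have hmne : m.Nonempty := by
    by_contra hemp
    rw [Set.not_nonempty_iff_eq_empty] at hemp
    exact hmcβ (hcons m hm mᶜ (hcompl m hmH) (by simp [hemp]))
  have hint : ∀ j, (m ∩ h j).Nonempty := by
    intro j
    by_contra hemp
    rw [Set.not_nonempty_iff_eq_empty] at hemp
    have hsubc : h j ⊆ mᶜ := by
      intro x hx hxm
      exact absurd (Set.eq_empty_iff_forall_notMem.mp hemp x ⟨hxm, hx⟩) (fun h => h)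
    exact hmcβ (hcons (h j) (hall j) mᶜ (hcompl m hmH) hsubc)
  obtain ⟨x, hx⟩ := hmne
  have hx' : ∃ i, x ∉ h i := by
    by_contra hc
    push_neg at hc
    have : x ∈ ⋂ i, h i := Set.mem_iInter.mpr hc
    rw [hinter] at this; exact this
  obtain ⟨i₁, hi₁⟩ := hx'
  obtain ⟨y, hy0, hym⟩ := hdiff 0
  have hy' : ∃ i, y ∉ h i := by
    by_contra hc
    push_neg at hc
    have : y ∈ ⋂ i, h i := Set.mem_iInter.mpr hc
    rw [hinter] at this; exact this
  obtain ⟨i₂, hi₂⟩ := hy'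
  set N := max i₁ i₂ with hN
  have hcross : ∀ j, N ≤ j → Crosses m (h j) := by
    intro j hj
    refine ⟨hint j, ⟨x, hx, fun hxj => hi₁ (hmono i₁ j (le_trans (le_max_left _ _) hj) hxj)⟩,
      hdiff j, ⟨y, ?_⟩⟩
    intro hy
    rcases hy with hy | hy
    · exact hym hy
    · exact hi₂ (hmono i₂ j (le_trans (le_max_right _ _) hj) hy)
  exact hss N m hmH ⟨hcross N le_rfl, hcross (N + 1) (Nat.le_succ N)⟩
end

section
/- Let V be a set and let H be a collection of subsets of V that is closed under complementation. Let α and β be distinct strongly separated ultrafilters on H. Then there exist h ∈ α and k ∈ β with h ∩ k = ∅ such that h and k are strongly separated (no m ∈ H crosses both h and k). -/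
variable {V : Type*}

/-- A strongly separated ultrafilter: one containing all terms of some strongly
separated descending sequence. -/
def IsSSUltrafilter (H : Set (Set V)) (α : Set (Set V)) : Prop :=
  IsUltrafilterOn H α ∧ ∃ h : ℕ → Set V, IsSSDescSeq H h ∧ ∀ i, h i ∈ α

lemma crosses_compl_right (m k : Set V) : Crosses m kᶜ ↔ Crosses m k := by
  unfold Crosses
  simp only [Set.nonempty_def, Set.mem_inter_iff, Set.mem_diff, Set.mem_compl_iff,
    Set.mem_union, not_or, not_not]
  tauto

lemma ultra_inter_nonempty {H α : Set (Set V)} (hcompl : ∀ h ∈ H, hᶜ ∈ H)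
    (hU : IsUltrafilterOn H α) {h k : Set V} (hh : h ∈ α) (hk : k ∈ α) :
    (h ∩ k).Nonempty := by
  obtain ⟨hsub, hxor, hcons⟩ := hU
  by_contra hemp
  rw [Set.not_nonempty_iff_eq_empty] at hemp
  have hsubc : h ⊆ kᶜ := by
    intro x hx hxk
    exact absurd hemp (by simp [Set.eq_empty_iff_forall_notMem]; exact ⟨x, hx, hxk⟩)
  have hkc : kᶜ ∈ α := hcons h hh kᶜ (hcompl k (hsub hk)) hsubc
  rcases hxor k (hsub hk) with ⟨_, h2⟩ | ⟨_, h2⟩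
  · exact h2 hkc
  · exact h2 hk

lemma desc_antitone {b : ℕ → Set V} (hdesc : ∀ i, b (i + 1) ⊆ b i) :
    ∀ i j, i ≤ j → b j ⊆ b i := by
  intro i j hij
  induction j, hij using Nat.le_induction with
  | base => exact subset_rfl
  | succ n _ ih => exact (hdesc n).trans ih

/-- Distinct strongly separated ultrafilters contain disjoint, strongly separated
halfspaces. -/
theorem exists_disjoint_stronglySeparated_halfspaces
    (H : Set (Set V)) (hcompl : ∀ h ∈ H, hᶜ ∈ H)
    (α β : Set (Set V)) (hα : IsSSUltrafilter H α) (hβ : IsSSUltrafilter H β)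
    (hne : α ≠ β) :
    ∃ h ∈ α, ∃ k ∈ β, h ∩ k = ∅ ∧ StronglySeparated H h k := by
  obtain ⟨hαU, _⟩ := hα
  obtain ⟨hβU, b, ⟨hbH, hbne, hbdesc, hbint, hbss⟩, hbβ⟩ := hβ
  obtain ⟨hαsub, hαxor, hαcons⟩ := hαU
  obtain ⟨hβsub, hβxor, hβcons⟩ := hβU
  -- Get m ∈ α with mᶜ ∈ β.
  obtain ⟨m, hmα, hmcβ⟩ : ∃ m, m ∈ α ∧ mᶜ ∈ β := by
    by_contra hcon
    push_neg at hcon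
    apply hne
    ext s
    constructor
    · intro hsα
      by_contra hsβ
      rcases hβxor s (hαsub hsα) with ⟨h1, _⟩ | ⟨h1, _⟩
      · exact hsβ h1
      · exact hcon s hsα h1
    · intro hsβ
      by_contra hsα
      rcases hαxor s (hβsub hsβ) with ⟨h1, _⟩ | ⟨h1, _⟩
      · exact hsα h1
      · exact hcon sᶜ h1 (by rwa [compl_compl])
  by_cases hall : ∀ j, b j ∈ α
  · -- All b j ∈ α: contradiction via crossing.
    exfalso
    have hmne : m.Nonempty := ((ultra_inter_nonempty hcompl ⟨hαsub, hαxor, hαcons⟩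
      hmα (hall 0)).mono Set.inter_subset_left)
    have hmcne : (mᶜ : Set V).Nonempty := ((ultra_inter_nonempty hcompl
      ⟨hβsub, hβxor, hβcons⟩ hmcβ (hbβ 0)).mono Set.inter_subset_left)
    obtain ⟨x, hx⟩ := hmne
    obtain ⟨y, hy⟩ := hmcne
    have hxout : ∃ j1, x ∉ b j1 := by
      by_contra hc
      push_neg at hc
      have : x ∈ ⋂ i, b i := Set.mem_iInter.2 hc
      rw [hbint] at this; exact this
    have hyout : ∃ j2, y ∉ b j2 := by
      by_contra hc
      push_neg at hc
      have : y ∈ ⋂ i, b i := Set.mem_iInter.2 hc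
      rw [hbint] at this; exact this
    obtain ⟨j1, hj1⟩ := hxout
    obtain ⟨j2, hj2⟩ := hyout
    set J := max j1 j2 with hJ
    have hcross : ∀ j, J ≤ j → Crosses m (b j) := by
      intro j hj
      refine ⟨ultra_inter_nonempty hcompl ⟨hαsub, hαxor, hαcons⟩ hmα (hall j),
        ⟨x, hx, fun hxb => hj1 (desc_antitone hbdesc j1 j ((le_max_left _ _).trans hj) hxb)⟩,
        ?_, ⟨y, ?_⟩⟩
      · have := ultra_inter_nonempty hcompl ⟨hβsub, hβxor, hβcons⟩ hmcβ (hbβ j)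
        obtain ⟨z, hz1, hz2⟩ := this
        exact ⟨z, hz2, hz1⟩
      · simp only [Set.mem_compl_iff, Set.mem_union, not_or]
        exact ⟨hy, fun hyb => hj2 (desc_antitone hbdesc j2 j ((le_max_right _ _).trans hj) hyb)⟩
    exact hbss J m (hαsub hmα) ⟨hcross J le_rfl, hcross (J + 1) (Nat.le_succ J)⟩
  · push_neg at hall
    obtain ⟨j, hjα⟩ := hall
    have hbjc : (b j)ᶜ ∈ α := by
      rcases hαxor (b j) (hbH j) with ⟨h1, _⟩ | ⟨h1, _⟩
      · exact absurd h1 hjα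
      · exact h1
    refine ⟨(b j)ᶜ, hbjc, b (j + 1), hbβ (j + 1), ?_, ?_⟩
    · rw [Set.eq_empty_iff_forall_notMem]
      rintro z ⟨hz1, hz2⟩
      exact hz1 (hbdesc j hz2)
    · intro n hn ⟨hc1, hc2⟩
      exact hbss j n hn ⟨(crosses_compl_right n (b j)).1 hc1, hc2⟩
end

section
/- Let V be a set and let H be a collection of subsets of V that is closed under complementation, and suppose that for all a, b ∈ H the interval {m ∈ H : a ⊆ m ⊆ b} is finite. Let α, β, γ be pairwise distinct strongly separated ultrafilters on H. Then the median med(α, β, γ) := (α ∩ β) ∪ (β ∩ γ) ∪ (γ ∩ α) satisfies the descending chain condition: there is no sequence (m_i)_{i ∈ ℕ} of members of med(α, β, γ) with m_{i+1} ⊊ m_i for every i. -/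
/-!
A strictly descending chain in the median lies frequently in `δ ∩ ε` for two distinct
ultrafilters `δ`, `ε`, where `δ` is strongly separated; pick `h ∈ δ` with `hᶜ ∈ ε`. The strongly
separated sequence `(f j)` of `δ` eventually lies inside `h`, and since intervals are finite,
a late member `m` of the chain contains none of `hᶜ`, `f N`, `f (N + 1)`. Then `m` crosses both
`f N` and `f (N + 1)`, contradicting their strong separation.
-/

variable {V : Type*}

/-- The set `k` supplies the witnesses for `m \ f` and `(m ∪ f)ᶜ`. -/
theorem crosses_of_disjoint {m f k : Set V} (hfk : Disjoint f k) (hmf : (m ∩ f).Nonempty)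
    (hfm : ¬ f ⊆ m) (hmk : (m ∩ k).Nonempty) (hkm : ¬ k ⊆ m) : Crosses m f := by
  refine ⟨hmf, ?_, Set.sdiff_nonempty.2 hfm, ?_⟩
  · exact hmk.mono fun x hx => ⟨hx.1, fun hxf => Set.disjoint_left.1 hfk hxf hx.2⟩
  · exact (Set.sdiff_nonempty.2 hkm).mono fun x hx hxmf =>
      hxmf.elim hx.2 fun hxf => Set.disjoint_left.1 hfk hxf hx.1

theorem eventually_notMem_of_iInter_eq_empty {f : ℕ → Set V} (hf : Antitone f)
    (hempty : ⋂ i, f i = ∅) (x : V) : ∀ᶠ j in Filter.atTop, x ∉ f j := by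
  obtain ⟨i, hi⟩ := Set.iInter_eq_empty_iff.1 hempty x
  exact Filter.eventually_atTop.2 ⟨i, fun j hij hx => hi (hf hij hx)⟩

namespace IsUltrafilterOn

variable {H δ ε : Set (Set V)}

theorem compl_mem_iff (hδ : IsUltrafilterOn H δ) {h : Set V} (hh : h ∈ H) :
    hᶜ ∈ δ ↔ h ∉ δ := by
  rw [iff_not_comm, ← xor_iff_iff_not]
  exact hδ.2.1 h hh

theorem inter_nonempty (hcompl : ∀ h ∈ H, hᶜ ∈ H) (hδ : IsUltrafilterOn H δ) {a b : Set V}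
    (ha : a ∈ δ) (hb : b ∈ δ) : (a ∩ b).Nonempty := by
  by_contra hab
  have hsub : a ⊆ bᶜ := fun x hxa hxb => hab ⟨x, hxa, hxb⟩
  have hbc : bᶜ ∈ δ := hδ.2.2 a ha bᶜ (hcompl b (hδ.1 hb)) hsub
  exact (hδ.compl_mem_iff (hδ.1 hb)).1 hbc hb

theorem exists_mem_compl_mem_of_ne (hδ : IsUltrafilterOn H δ) (hε : IsUltrafilterOn H ε)
    (hne : δ ≠ ε) : ∃ h ∈ δ, hᶜ ∈ ε := by
  by_contra! hc
  refine hne (Set.ext fun h => ⟨fun hhδ => ?_, fun hhε => ?_⟩)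
  · exact not_not.1 fun hhε => hc h hhδ ((hε.compl_mem_iff (hδ.1 hhδ)).2 hhε)
  · refine not_not.1 fun hhδ => hc hᶜ ((hδ.compl_mem_iff (hε.1 hhε)).2 hhδ) ?_
    rwa [compl_compl]

end IsUltrafilterOn

/-- Otherwise `h` would cross two consecutive terms of `f`. -/
theorem IsSSDescSeq.eventually_subset_of_mem {H δ : Set (Set V)}
    (hcompl : ∀ h ∈ H, hᶜ ∈ H) (hδ : IsUltrafilterOn H δ) {f : ℕ → Set V}
    (hf : IsSSDescSeq H f) (hfδ : ∀ i, f i ∈ δ) {h : Set V} (hh : h ∈ δ) :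
    ∀ᶠ j in Filter.atTop, f j ⊆ h := by
  obtain ⟨-, -, hdesc, hempty, hsep⟩ := hf
  have hanti : Antitone f := antitone_nat_of_succ_le hdesc
  by_contra hev
  have hnot : ∀ j, ¬ f j ⊆ h := fun j hj =>
    hev (Filter.eventually_atTop.2 ⟨j, fun k hjk => (hanti hjk).trans hj⟩)
  obtain ⟨x, -, hxh⟩ := Set.not_subset.1 (hnot 0)
  obtain ⟨y, hyh⟩ := hδ.inter_nonempty hcompl hh hh
  have hcross : ∀ᶠ j in Filter.atTop, Crosses h (f j) := by
    filter_upwards [eventually_notMem_of_iInter_eq_empty hanti hempty x,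
      eventually_notMem_of_iInter_eq_empty hanti hempty y] with j hxj hyj
    exact ⟨hδ.inter_nonempty hcompl hh (hfδ j), ⟨y, hyh.1, hyj⟩,
      Set.sdiff_nonempty.2 (hnot j), ⟨x, fun hx => hx.elim hxh hxj⟩⟩
  obtain ⟨j, hj, hj'⟩ :=
    (hcross.and ((Filter.tendsto_add_atTop_nat 1).eventually hcross)).exists
  exact hsep j h (hδ.1 hh) ⟨hj, hj'⟩

theorem eventually_not_subset_of_strictAnti {H : Set (Set V)}
    (hint : ∀ a ∈ H, ∀ b ∈ H, Set.Finite {m | m ∈ H ∧ a ⊆ m ∧ m ⊆ b})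
    {m : ℕ → Set V} (hm : StrictAnti m) (hmH : ∀ i, m i ∈ H) {a : Set V} (ha : a ∈ H) :
    ∀ᶠ i in Filter.atTop, ¬ a ⊆ m i := by
  obtain ⟨i, hi⟩ : ∃ i, ¬ a ⊆ m i := by
    by_contra! hsub
    exact Set.infinite_of_injective_forall_mem hm.injective
      (s := {x | x ∈ H ∧ a ⊆ x ∧ x ⊆ m 0})
      (fun i => ⟨hmH i, hsub i, hm.antitone (Nat.zero_le i)⟩) (hint a ha (m 0) (hmH 0))
  exact Filter.eventually_atTop.2 ⟨i, fun j hij hj => hi (hj.trans (hm.antitone hij))⟩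

theorem IsSSUltrafilter.not_frequently_mem_inter {H δ ε : Set (Set V)}
    (hcompl : ∀ h ∈ H, hᶜ ∈ H)
    (hint : ∀ a ∈ H, ∀ b ∈ H, Set.Finite {m | m ∈ H ∧ a ⊆ m ∧ m ⊆ b})
    (hδ : IsSSUltrafilter H δ) (hε : IsUltrafilterOn H ε) (hne : δ ≠ ε)
    {m : ℕ → Set V} (hm : StrictAnti m) (hmH : ∀ i, m i ∈ H) :
    ¬ ∃ᶠ i in Filter.atTop, m i ∈ δ ∩ ε := by
  intro hfreq
  obtain ⟨hδu, f, hf, hfδ⟩ := hδ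
  obtain ⟨h, hhδ, hhε⟩ := hδu.exists_mem_compl_mem_of_ne hε hne
  obtain ⟨N, hN⟩ := Filter.eventually_atTop.1 (hf.eventually_subset_of_mem hcompl hδu hfδ hhδ)
  have hlate := fun {a} (ha : a ∈ H) => eventually_not_subset_of_strictAnti hint hm hmH ha
  obtain ⟨I, ⟨hIδ, hIε⟩, hIh, hIN, hIN'⟩ := (hfreq.and_eventually
    ((hlate (hcompl h (hδu.1 hhδ))).and ((hlate (hf.1 N)).and (hlate (hf.1 (N + 1)))))).exists
  have hcross : ∀ j, N ≤ j → ¬ f j ⊆ m I → Crosses (m I) (f j) := fun j hj hfj =>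
    crosses_of_disjoint (Set.disjoint_compl_right_iff_subset.2 (hN j hj))
      (hδu.inter_nonempty hcompl hIδ (hfδ j)) hfj (hε.inter_nonempty hcompl hIε hhε) hIh
  exact hf.2.2.2.2 N (m I) (hmH I) ⟨hcross N le_rfl hIN, hcross (N + 1) N.le_succ hIN'⟩

/-- If intervals in `H` are finite, then the median of three pairwise distinct strongly
separated ultrafilters satisfies the descending chain condition. -/
theorem median_of_ssUltrafilters_dcc
    (H : Set (Set V)) (hcompl : ∀ h ∈ H, hᶜ ∈ H)
    (hint : ∀ a ∈ H, ∀ b ∈ H, Set.Finite {m | m ∈ H ∧ a ⊆ m ∧ m ⊆ b})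
    (α β γ : Set (Set V))
    (hα : IsSSUltrafilter H α) (hβ : IsSSUltrafilter H β)
    (hγ : IsSSUltrafilter H γ)
    (hαβ : α ≠ β) (hβγ : β ≠ γ) (hγα : γ ≠ α) :
    ¬ ∃ m : ℕ → Set V,
        (∀ i, m i ∈ (α ∩ β) ∪ (β ∩ γ) ∪ (γ ∩ α)) ∧ ∀ i, m (i + 1) ⊂ m i := by
  rintro ⟨m, hmed, hdesc⟩
  have hm : StrictAnti m := strictAnti_nat_of_succ_lt hdesc
  have hmH : ∀ i, m i ∈ H := fun i => by
    rcases hmed i with (hi | hi) | hi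
    exacts [hα.1.1 hi.1, hβ.1.1 hi.1, hγ.1.1 hi.1]
  have hfreq : ∃ᶠ i in Filter.atTop, m i ∈ (α ∩ β) ∪ (β ∩ γ) ∪ (γ ∩ α) :=
    (Filter.Eventually.of_forall hmed).frequently
  simp only [Set.mem_union, Filter.frequently_or_distrib] at hfreq
  rcases hfreq with (hfreq | hfreq) | hfreq
  · exact hα.not_frequently_mem_inter hcompl hint hβ.1 hαβ hm hmH hfreq
  · exact hβ.not_frequently_mem_inter hcompl hint hγ.1 hβγ hm hmH hfreq
  · exact hγ.not_frequently_mem_inter hcompl hint hα.1 hγα hm hmH hfreq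
end
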